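/- Norm bound for λ_∅-vectors: ‖λ_∅(x_1,...,x_n)ξ_ω‖² ≤ (Σ_{p=0}^n p! C(n,p)²) Π_{i=1}^n |||x_i|||² ≤ C n^{2n} Π_{i=1}^n |||x_i|||² for an absolute constant C > 0, using p! C(n,p)² ≤ n^{2p}/p! and Σ_{p=0}^n n^{2p}/p! ≤ e · n^{2n} for n ≥ 1. -/

import Mathlib

/-! Cauchy–Schwarz for the positive hermitian form `(a, b) ↦ ω (star a * b)` bounds every pairing
`ω (x_i⋆ x_j)` by `|||x_i||| |||x_j|||`, so a pair `(s, t)` with `#s = #t = p` contributes at most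
`p! ∏ |||x_i|||²` to `lamEmptyIP`, and there are `C(n, p)²` such pairs. The numerical bounds come
from `p! C(n, p) = n (n - 1) ⋯ (n - p + 1) ≤ n ^ p` and
`∑ n ^ (2p) / p! ≤ n ^ (2n) ∑ 1 / p! ≤ e n ^ (2n)`. -/

variable {N : Type*} [NormedRing N] [StarRing N] [NormedAlgebra ℂ N]

/-- The norm `|||x||| := max{‖x‖, ω(x*x)^{1/2}, ω(xx*)^{1/2}, |ω(x)|}`. -/
noncomputable def tripleNorm (ω : N →ₗ[ℂ] ℂ) (x : N) : ℝ :=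
  max (max ‖x‖ (Real.sqrt (ω (star x * x)).re))
    (max (Real.sqrt (ω (x * star x)).re) ‖ω x‖)

/-- The combinatorial squared norm of a `λ_∅`-vector (its inner product with itself),
given by the pairing formula. -/
noncomputable def lamEmptyIP (ω : N →ₗ[ℂ] ℂ) {ι κ : Type*}
    [Fintype ι] [Fintype κ] [DecidableEq ι] [DecidableEq κ]
    (x : ι → N) (y : κ → N) : ℂ :=
  ∑ s : Finset ι, ∑ t : Finset κ,
    if s.card = t.card then
      (∑ e : {i // i ∈ s} ≃ {j // j ∈ t}, ∏ i : {i // i ∈ s}, ω (star (x i.1) * y (e i).1))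
        * (∏ i ∈ sᶜ, ω (star (x i))) * (∏ j ∈ tᶜ, ω (y j))
    else 0

section StarMulForm

variable {A : Type*} [Ring A] [StarRing A] [Algebra ℂ A] (ω : A →ₗ[ℂ] ℂ)

noncomputable abbrev starMulFormCore (hpos : ∀ a, 0 ≤ (ω (star a * a)).re)
    (hstar : ∀ a, ω (star a) = starRingEnd ℂ (ω a)) : PreInnerProductSpace.Core ℂ A where
  inner a b := ω (star a * b)
  conj_inner_symm a b := by rw [← hstar, star_mul, star_star]
  re_inner_nonneg := hpos
  add_left a b c := by rw [star_add, add_mul, map_add]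
  smul_left a b r := by
    rw [← star_star (star (r • a) * b), star_mul, star_star, hstar, mul_smul_comm, map_smul,
      smul_eq_mul, map_mul, ← hstar, star_mul, star_star]

theorem norm_apply_star_mul_le (hpos : ∀ a, 0 ≤ (ω (star a * a)).re)
    (hstar : ∀ a, ω (star a) = starRingEnd ℂ (ω a)) (a b : A) :
    ‖ω (star a * b)‖ ≤ √(ω (star a * a)).re * √(ω (star b * b)).re := by
  let _ : PreInnerProductSpace.Core ℂ A := starMulFormCore ω hpos hstar
  have h := InnerProductSpace.Core.inner_mul_inner_self_le (𝕜 := ℂ) a b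
  rw [InnerProductSpace.Core.norm_inner_symm b a, ← sq] at h
  rw [← Real.sqrt_mul (hpos a), ← Real.sqrt_sq (norm_nonneg _)]
  exact Real.sqrt_le_sqrt h

end StarMulForm

open Finset
open scoped Nat

section TripleNorm

variable (ω : N →ₗ[ℂ] ℂ) (a : N)

theorem norm_le_tripleNorm : ‖a‖ ≤ tripleNorm ω a :=
  (le_max_left _ _).trans (le_max_left _ _)

theorem sqrt_re_apply_star_mul_self_le_tripleNorm : √(ω (star a * a)).re ≤ tripleNorm ω a :=
  (le_max_right _ _).trans (le_max_left _ _)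

theorem norm_apply_le_tripleNorm : ‖ω a‖ ≤ tripleNorm ω a :=
  (le_max_right _ _).trans (le_max_right _ _)

theorem tripleNorm_nonneg : 0 ≤ tripleNorm ω a :=
  (norm_nonneg a).trans (norm_le_tripleNorm ω a)

theorem norm_apply_star_le_tripleNorm (hstar : ∀ a : N, ω (star a) = starRingEnd ℂ (ω a)) :
    ‖ω (star a)‖ ≤ tripleNorm ω a := by
  rw [hstar, Complex.norm_conj]
  exact norm_apply_le_tripleNorm ω a

theorem norm_apply_star_mul_le_tripleNorm_mul (hpos : ∀ a : N, 0 ≤ (ω (star a * a)).re)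
    (hstar : ∀ a : N, ω (star a) = starRingEnd ℂ (ω a)) (b : N) :
    ‖ω (star a * b)‖ ≤ tripleNorm ω a * tripleNorm ω b :=
  (norm_apply_star_mul_le ω hpos hstar a b).trans <|
    mul_le_mul (sqrt_re_apply_star_mul_self_le_tripleNorm ω a)
      (sqrt_re_apply_star_mul_self_le_tripleNorm ω b) (Real.sqrt_nonneg _) (tripleNorm_nonneg ω a)

end TripleNorm

theorem card_equiv_finset_subtype {ι κ : Type*} [DecidableEq ι] [DecidableEq κ]
    {s : Finset ι} {t : Finset κ} (h : #s = #t) :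
    Fintype.card ({i // i ∈ s} ≃ {j // j ∈ t}) = (#s)! := by
  rw [Fintype.card_equiv (Fintype.equivOfCardEq (by simpa using h)), Fintype.card_coe]

theorem sum_sum_ite_card_eq {ι κ R : Type*} [Fintype ι] [Fintype κ] [AddCommMonoid R]
    (f : ℕ → R) :
    ∑ s : Finset ι, ∑ t : Finset κ, (if #s = #t then f #s else 0)
      = ∑ p ∈ range (Fintype.card ι + 1),
          ((Fintype.card ι).choose p * (Fintype.card κ).choose p) • f p := by
  classical
  have inner (s : Finset ι) : ∑ t : Finset κ, (if #s = #t then f #s else 0)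
      = (Fintype.card κ).choose #s • f #s := by
    rw [← sum_filter, sum_const, ← card_univ (α := κ), ← card_powersetCard, powersetCard_eq_filter,
      powerset_univ]
    simp_rw [eq_comm]
  rw [sum_congr rfl fun s _ => inner s, ← powerset_univ,
    sum_powerset_apply_card fun p => (Fintype.card κ).choose p • f p, card_univ]
  simp_rw [smul_smul]

theorem norm_prod_le_prod {α : Type*} (s : Finset α) {f : α → ℂ} {g : α → ℝ}
    (h : ∀ i, ‖f i‖ ≤ g i) : ‖∏ i ∈ s, f i‖ ≤ ∏ i ∈ s, g i :=
  (norm_prod s f).trans_le (prod_le_prod (fun _ _ => norm_nonneg _) fun i _ => h i)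

section LamEmpty

variable {ι κ : Type*} [DecidableEq ι] [DecidableEq κ]
  (ω : N →ₗ[ℂ] ℂ) {x : ι → N} {y : κ → N} {u : ι → ℝ} {v : κ → ℝ}

theorem norm_sum_equiv_prod_le (hxy : ∀ i j, ‖ω (star (x i) * y j)‖ ≤ u i * v j)
    {s : Finset ι} {t : Finset κ} (h : #s = #t) :
    ‖∑ e : {i // i ∈ s} ≃ {j // j ∈ t}, ∏ i : {i // i ∈ s}, ω (star (x i.1) * y (e i).1)‖
      ≤ (#s)! * ((∏ i ∈ s, u i) * ∏ j ∈ t, v j) := by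
  have hterm (e : {i // i ∈ s} ≃ {j // j ∈ t}) :
      ‖∏ i : {i // i ∈ s}, ω (star (x i.1) * y (e i).1)‖ ≤ (∏ i ∈ s, u i) * ∏ j ∈ t, v j := by
    calc _ ≤ ∏ i : {i // i ∈ s}, u i.1 * v (e i).1 := norm_prod_le_prod _ fun i => hxy _ _
      _ = (∏ i ∈ s, u i) * ∏ j ∈ t, v j := by
        rw [prod_mul_distrib, e.prod_comp (fun j => v j.1), prod_coe_sort, prod_coe_sort]
  calc _ ≤ ∑ _e : {i // i ∈ s} ≃ {j // j ∈ t}, (∏ i ∈ s, u i) * ∏ j ∈ t, v j :=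
        (norm_sum_le _ _).trans (sum_le_sum fun e _ => hterm e)
    _ = (#s)! * ((∏ i ∈ s, u i) * ∏ j ∈ t, v j) := by
        rw [sum_const, card_univ, card_equiv_finset_subtype h, nsmul_eq_mul]

theorem norm_lamEmptyIP_le [Fintype ι] [Fintype κ] (hu : ∀ i, 0 ≤ u i) (hv : ∀ j, 0 ≤ v j)
    (hxy : ∀ i j, ‖ω (star (x i) * y j)‖ ≤ u i * v j) (hx : ∀ i, ‖ω (star (x i))‖ ≤ u i)
    (hy : ∀ j, ‖ω (y j)‖ ≤ v j) :
    ‖lamEmptyIP ω x y‖ ≤ (∑ p ∈ range (Fintype.card ι + 1),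
        (p ! : ℝ) * (Fintype.card ι).choose p * (Fintype.card κ).choose p)
      * ((∏ i, u i) * ∏ j, v j) := by
  have hterm (s : Finset ι) (t : Finset κ) :
      ‖if #s = #t then
          (∑ e : {i // i ∈ s} ≃ {j // j ∈ t}, ∏ i : {i // i ∈ s}, ω (star (x i.1) * y (e i).1))
            * (∏ i ∈ sᶜ, ω (star (x i))) * (∏ j ∈ tᶜ, ω (y j))
        else 0‖
        ≤ if #s = #t then ((#s)! : ℝ) * ((∏ i, u i) * ∏ j, v j) else 0 := by
    split_ifs with h
    · rw [norm_mul, norm_mul, ← prod_mul_prod_compl s u, ← prod_mul_prod_compl t v]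
      calc _ ≤ (#s)! * ((∏ i ∈ s, u i) * ∏ j ∈ t, v j) * (∏ i ∈ sᶜ, u i) * ∏ j ∈ tᶜ, v j := by
            have hst : 0 ≤ ((#s)! : ℝ) * ((∏ i ∈ s, u i) * ∏ j ∈ t, v j) :=
              mul_nonneg (Nat.cast_nonneg _) (mul_nonneg (prod_nonneg fun i _ => hu i)
                (prod_nonneg fun j _ => hv j))
            gcongr
            · exact mul_nonneg hst (prod_nonneg fun i _ => hu i)
            · exact norm_sum_equiv_prod_le ω hxy h
            · exact norm_prod_le_prod _ hx
            · exact norm_prod_le_prod _ hy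
        _ = _ := by ring
    · simp
  calc ‖lamEmptyIP ω x y‖
      ≤ ∑ s : Finset ι, ∑ t : Finset κ,
          if #s = #t then ((#s)! : ℝ) * ((∏ i, u i) * ∏ j, v j) else 0 :=
        (norm_sum_le _ _).trans <| sum_le_sum fun s _ =>
          (norm_sum_le _ _).trans <| sum_le_sum fun t _ => hterm s t
    _ = _ := by
        rw [sum_sum_ite_card_eq fun p => (p ! : ℝ) * ((∏ i, u i) * ∏ j, v j), sum_mul]
        refine sum_congr rfl fun p _ => ?_
        rw [nsmul_eq_mul]
        push_cast
        ring

end LamEmpty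

theorem factorial_mul_choose_sq_le (n p : ℕ) :
    (p ! * (n.choose p) ^ 2 : ℝ) ≤ (n : ℝ) ^ (2 * p) / p ! := by
  have h : ((p ! * n.choose p : ℕ) : ℝ) ≤ (n : ℝ) ^ p := by
    exact_mod_cast n.descFactorial_eq_factorial_mul_choose p ▸ n.descFactorial_le_pow p
  push_cast at h
  rw [le_div_iff₀ (by positivity)]
  calc (p ! * (n.choose p) ^ 2 * p ! : ℝ) = (p ! * n.choose p) ^ 2 := by ring
    _ ≤ ((n : ℝ) ^ p) ^ 2 := by gcongr
    _ = (n : ℝ) ^ (2 * p) := by ring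

theorem sum_range_pow_div_factorial_le_exp_mul_pow (n : ℕ) :
    ∑ p ∈ range (n + 1), (n : ℝ) ^ (2 * p) / p ! ≤ Real.exp 1 * (n : ℝ) ^ (2 * n) := by
  have hpow (p : ℕ) (hp : p ∈ range (n + 1)) : (n : ℝ) ^ (2 * p) ≤ (n : ℝ) ^ (2 * n) := by
    rw [mem_range] at hp
    rcases n.eq_zero_or_pos with rfl | hn
    · rw [Nat.lt_one_iff.mp hp]
    · exact pow_le_pow_right₀ (by exact_mod_cast hn) (by omega)
  calc _ ≤ ∑ p ∈ range (n + 1), (n : ℝ) ^ (2 * n) * (1 ^ p / p !) :=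
        sum_le_sum fun p hp => by
          rw [one_pow, mul_one_div]
          exact div_le_div_of_nonneg_right (hpow p hp) (by positivity)
    _ = (n : ℝ) ^ (2 * n) * ∑ p ∈ range (n + 1), (1 : ℝ) ^ p / p ! := (mul_sum _ _ _).symm
    _ ≤ (n : ℝ) ^ (2 * n) * Real.exp 1 := by
        gcongr
        exact Real.sum_le_exp_of_nonneg zero_le_one _
    _ = _ := mul_comm _ _

theorem lamEmpty_norm_bound_general
    (ω : N →ₗ[ℂ] ℂ)
    (hpos : ∀ a : N, 0 ≤ (ω (star a * a)).re ∧ (ω (star a * a)).im = 0)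
    (hstar : ∀ a : N, ω (star a) = starRingEnd ℂ (ω a))
    (n : ℕ) (x : Fin n → N) :
    ‖lamEmptyIP ω x x‖
        ≤ (∑ p ∈ Finset.range (n + 1), (p.factorial * (n.choose p) ^ 2 : ℝ))
          * ∏ i, tripleNorm ω (x i) ^ 2 ∧
    (∀ p ≤ n, (p.factorial * (n.choose p) ^ 2 : ℝ) ≤ (n : ℝ) ^ (2 * p) / p.factorial) ∧
    (∑ p ∈ Finset.range (n + 1), (n : ℝ) ^ (2 * p) / p.factorial)
        ≤ Real.exp 1 * (n : ℝ) ^ (2 * n) ∧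
    ‖lamEmptyIP ω x x‖
        ≤ Real.exp 1 * (n : ℝ) ^ (2 * n) * ∏ i, tripleNorm ω (x i) ^ 2 := by
  have hpos' (a : N) : 0 ≤ (ω (star a * a)).re := (hpos a).1
  have hbound : ‖lamEmptyIP ω x x‖
      ≤ (∑ p ∈ range (n + 1), (p ! * (n.choose p) ^ 2 : ℝ)) * ∏ i, tripleNorm ω (x i) ^ 2 := by
    have h := norm_lamEmptyIP_le ω (u := fun i => tripleNorm ω (x i))
      (v := fun i => tripleNorm ω (x i)) (fun i => tripleNorm_nonneg ω (x i))
      (fun i => tripleNorm_nonneg ω (x i))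
      (fun i j => norm_apply_star_mul_le_tripleNorm_mul ω (x i) hpos' hstar (x j))
      (fun i => norm_apply_star_le_tripleNorm ω (x i) hstar)
      (fun i => norm_apply_le_tripleNorm ω (x i))
    simpa only [Fintype.card_fin, mul_assoc, ← sq, prod_pow] using h
  have hsum : ∑ p ∈ range (n + 1), (p ! * (n.choose p) ^ 2 : ℝ)
      ≤ ∑ p ∈ range (n + 1), (n : ℝ) ^ (2 * p) / p ! :=
    sum_le_sum fun p _ => factorial_mul_choose_sq_le n p
  refine ⟨hbound, fun p _ => factorial_mul_choose_sq_le n p,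
    sum_range_pow_div_factorial_le_exp_mul_pow n, ?_⟩
  calc ‖lamEmptyIP ω x x‖ ≤ _ := hbound
    _ ≤ Real.exp 1 * (n : ℝ) ^ (2 * n) * ∏ i, tripleNorm ω (x i) ^ 2 := by
        gcongr
        exact hsum.trans (sum_range_pow_div_factorial_le_exp_mul_pow n)

/-- **Norm bound for `λ_∅`-vectors**:
`‖λ_∅(x_1,…,x_n)ξ_ω‖² ≤ (∑_{p=0}^n p! C(n,p)²) ∏_i |||x_i|||² ≤ C n^{2n} ∏_i |||x_i|||²`
(with `C = e`), using `p! C(n,p)² ≤ n^{2p}/p!` and `∑_{p=0}^n n^{2p}/p! ≤ e·n^{2n}`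
for `n ≥ 1`. -/
theorem lamEmpty_norm_bound [CStarRing N]
    (ω : N →ₗ[ℂ] ℂ)
    (hpos : ∀ a : N, 0 ≤ (ω (star a * a)).re ∧ (ω (star a * a)).im = 0)
    (hstar : ∀ a : N, ω (star a) = starRingEnd ℂ (ω a))
    (n : ℕ) (hn : 1 ≤ n) (x : Fin n → N) :
    ‖lamEmptyIP ω x x‖
        ≤ (∑ p ∈ Finset.range (n + 1), (p.factorial * (n.choose p) ^ 2 : ℝ))
          * ∏ i, tripleNorm ω (x i) ^ 2 ∧
    (∀ p ≤ n, (p.factorial * (n.choose p) ^ 2 : ℝ) ≤ (n : ℝ) ^ (2 * p) / p.factorial) ∧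
    (∑ p ∈ Finset.range (n + 1), (n : ℝ) ^ (2 * p) / p.factorial)
        ≤ Real.exp 1 * (n : ℝ) ^ (2 * n) ∧
    ‖lamEmptyIP ω x x‖
        ≤ Real.exp 1 * (n : ℝ) ^ (2 * n) * ∏ i, tripleNorm ω (x i) ^ 2 :=
  lamEmpty_norm_bound_general ω hpos hstar n x
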